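/- Let H_ρρ and W be symmetric positive definite matrices with W - H_ρρ positive semidefinite, and let Ĥ_d be symmetric positive semidefinite. Then for every index j, 0 ≤ λ_j(W^{-1} Ĥ_d) ≤ λ_j(H_ρρ^{-1} Ĥ_d), where λ_j denotes the j-th largest eigenvalue. -/

import Mathlib

/-!
Write `R = W^{1/2}`, `S = H_ρρ^{1/2}` and `L = S R⁻¹`. Then `R⁻¹ Ĥ_d R⁻¹ = Lᴴ (S⁻¹ Ĥ_d S⁻¹) L`,
and `1 - Lᴴ L = R⁻¹ (W - H_ρρ) R⁻¹ ≥ 0`, so `L` is an invertible contraction. For Hermitian `B`,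
the Courant–Fischer argument compares the sorted eigenvalues `a` of `Lᴴ B L` with those `b` of `B`:
the `(j+1)`-dimensional span of the top eigenvectors of `Lᴴ B L`, pushed forward by `L`, meets the
`(n-j)`-dimensional span of the bottom eigenvectors of `B`; on a common nonzero vector `y = L x`,
`a_j |x|² ≤ ⟨x, Lᴴ B L x⟩ = ⟨y, B y⟩ ≤ b_j |y|² ≤ b_j |x|²`, the last step because `b_j ≥ 0`.
-/

open Matrix

noncomputable def Matrix.PosSemidef.sqrt {n 𝕜 : Type*} [Fintype n] [DecidableEq n] [RCLike 𝕜]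
    [PartialOrder 𝕜]
    {A : Matrix n n 𝕜} (hA : A.PosSemidef) : Matrix n n 𝕜 :=
  hA.1.eigenvectorUnitary.1 * diagonal ((↑) ∘ Real.sqrt ∘ hA.1.eigenvalues) *
  (star hA.1.eigenvectorUnitary : Matrix n n 𝕜)

open Module

theorem Submodule.inf_ne_bot_of_finrank_lt_add {K V : Type*} [DivisionRing K] [AddCommGroup V]
    [Module K V] [FiniteDimensional K V] {p q : Submodule K V}
    (h : finrank K V < finrank K p + finrank K q) : p ⊓ q ≠ ⊥ := by
  intro hpq
  have hsum := Submodule.finrank_sup_add_finrank_inf_eq p q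
  rw [hpq, finrank_bot] at hsum
  have := Submodule.finrank_le (p ⊔ q)
  omega

theorem Matrix.dotProduct_conjTranspose_mul_mulVec {m n k : Type*} [Fintype m] [Fintype n]
    [Fintype k] (L : Matrix m n ℝ) (M : Matrix m k ℝ) (x : n → ℝ) (y : k → ℝ) :
    x ⬝ᵥ (Lᴴ * M) *ᵥ y = L *ᵥ x ⬝ᵥ M *ᵥ y := by
  rw [← mulVec_mulVec, dotProduct_mulVec, conjTranspose_eq_transpose_of_trivial, vecMul_transpose]

namespace Matrix.IsHermitian

variable {ι : Type*} [Fintype ι] [DecidableEq ι] {A : Matrix ι ι ℝ} (hA : A.IsHermitian)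

theorem eigenvectorBasis_dotProduct (i j : ι) :
    ⇑(hA.eigenvectorBasis i) ⬝ᵥ ⇑(hA.eigenvectorBasis j) = if i = j then 1 else 0 := by
  simpa [EuclideanSpace.inner_eq_star_dotProduct, dotProduct_comm] using
    orthonormal_iff_ite.1 hA.eigenvectorBasis.orthonormal i j

theorem sum_smul_eigenvectorBasis_dotProduct (T : Finset ι) (c d : ι → ℝ) :
    (∑ i ∈ T, c i • ⇑(hA.eigenvectorBasis i)) ⬝ᵥ (∑ i ∈ T, d i • ⇑(hA.eigenvectorBasis i)) =
      ∑ i ∈ T, c i * d i := by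
  simp [sum_dotProduct, dotProduct_sum, eigenvectorBasis_dotProduct, mul_comm]

theorem mulVec_sum_smul_eigenvectorBasis (T : Finset ι) (c : ι → ℝ) :
    A *ᵥ ∑ i ∈ T, c i • ⇑(hA.eigenvectorBasis i) =
      ∑ i ∈ T, (hA.eigenvalues i * c i) • ⇑(hA.eigenvectorBasis i) := by
  simp [mulVec_sum, mulVec_smul, mulVec_eigenvectorBasis, smul_smul, mul_comm]

noncomputable def eigenvectorSpan (T : Finset ι) : Submodule ℝ (ι → ℝ) :=
  Submodule.span ℝ ((fun i ↦ ⇑(hA.eigenvectorBasis i)) '' T)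

theorem finrank_eigenvectorSpan (T : Finset ι) : finrank ℝ (hA.eigenvectorSpan T) = T.card := by
  have hli : LinearIndependent ℝ fun i ↦ ⇑(hA.eigenvectorBasis i) :=
    linearIndependent_cols_iff_isUnit.2 (Unitary.isUnit_coe (U := hA.eigenvectorUnitary))
  rw [eigenvectorSpan, Set.image_eq_range, ← Fintype.card_coe,
    ← finrank_span_eq_card (hli.comp _ Subtype.val_injective)]
  rfl

theorem exists_dotProduct_mulVec_eq_sum_of_mem_eigenvectorSpan {T : Finset ι} {x : ι → ℝ}
    (hx : x ∈ hA.eigenvectorSpan T) :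
    ∃ d : ι → ℝ, x ⬝ᵥ A *ᵥ x = ∑ i ∈ T, hA.eigenvalues i * d i ^ 2 ∧
      x ⬝ᵥ x = ∑ i ∈ T, d i ^ 2 := by
  obtain ⟨d, hd, rfl⟩ := (Finsupp.mem_span_image_iff_linearCombination ℝ).1 hx
  rw [Finsupp.linearCombination_apply, Finsupp.sum_of_support_subset d hd _ (by simp)]
  refine ⟨d, ?_, ?_⟩ <;>
    simp only [mulVec_sum_smul_eigenvectorBasis, sum_smul_eigenvectorBasis_dotProduct] <;>
    exact Finset.sum_congr rfl fun i _ ↦ by ring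

theorem mul_dotProduct_le_of_mem_eigenvectorSpan {T : Finset ι} {x : ι → ℝ} {c : ℝ}
    (hc : ∀ i ∈ T, c ≤ hA.eigenvalues i) (hx : x ∈ hA.eigenvectorSpan T) :
    c * (x ⬝ᵥ x) ≤ x ⬝ᵥ A *ᵥ x := by
  obtain ⟨d, hq, hn⟩ := hA.exists_dotProduct_mulVec_eq_sum_of_mem_eigenvectorSpan hx
  rw [hq, hn, Finset.mul_sum]
  exact Finset.sum_le_sum fun i hi ↦ mul_le_mul_of_nonneg_right (hc i hi) (sq_nonneg _)

theorem dotProduct_mulVec_le_of_mem_eigenvectorSpan {T : Finset ι} {x : ι → ℝ} {c : ℝ}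
    (hc : ∀ i ∈ T, hA.eigenvalues i ≤ c) (hx : x ∈ hA.eigenvectorSpan T) :
    x ⬝ᵥ A *ᵥ x ≤ c * (x ⬝ᵥ x) := by
  obtain ⟨d, hq, hn⟩ := hA.exists_dotProduct_mulVec_eq_sum_of_mem_eigenvectorSpan hx
  rw [hq, hn, Finset.mul_sum]
  exact Finset.sum_le_sum fun i hi ↦ mul_le_mul_of_nonneg_right (hc i hi) (sq_nonneg _)

end Matrix.IsHermitian

theorem Matrix.PosSemidef.nonneg_of_eq_eigenvalues_comp {ι : Type*} [Fintype ι] [DecidableEq ι]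
    {A : Matrix ι ι ℝ} (hA : A.PosSemidef) {a : ι → ℝ}
    (hae : ∃ e : Equiv.Perm ι, a = hA.1.eigenvalues ∘ e) (j : ι) : 0 ≤ a j := by
  obtain ⟨e, rfl⟩ := hae
  exact hA.eigenvalues_nonneg (e j)

namespace Matrix.IsHermitian

variable {n : ℕ} {A : Matrix (Fin n) (Fin n) ℝ} (hA : A.IsHermitian) {a : Fin n → ℝ}

theorem exists_finrank_eq_forall_mul_dotProduct_le (ha : Antitone a) {e : Equiv.Perm (Fin n)}
    (hae : a = hA.eigenvalues ∘ e) (j : Fin n) :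
    ∃ V : Submodule ℝ (Fin n → ℝ), finrank ℝ V = j + 1 ∧
      ∀ x ∈ V, a j * (x ⬝ᵥ x) ≤ x ⬝ᵥ A *ᵥ x := by
  refine ⟨hA.eigenvectorSpan ((Finset.Iic j).map e.toEmbedding), by
    simp [finrank_eigenvectorSpan], fun x ↦ hA.mul_dotProduct_le_of_mem_eigenvectorSpan ?_⟩
  simp only [Finset.forall_mem_map, Finset.mem_Iic]
  intro i hij
  simpa [hae] using ha hij

theorem exists_finrank_eq_forall_dotProduct_le_mul (ha : Antitone a) {e : Equiv.Perm (Fin n)}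
    (hae : a = hA.eigenvalues ∘ e) (j : Fin n) :
    ∃ V : Submodule ℝ (Fin n → ℝ), finrank ℝ V = n - j ∧
      ∀ x ∈ V, x ⬝ᵥ A *ᵥ x ≤ a j * (x ⬝ᵥ x) := by
  refine ⟨hA.eigenvectorSpan ((Finset.Ici j).map e.toEmbedding), by
    simp [finrank_eigenvectorSpan], fun x ↦ hA.dotProduct_mulVec_le_of_mem_eigenvectorSpan ?_⟩
  simp only [Finset.forall_mem_map, Finset.mem_Ici]
  intro i hji
  simpa [hae] using ha hji

theorem eigenvalue_le_of_eq_conjTranspose_mul_mul {B L : Matrix (Fin n) (Fin n) ℝ}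
    (hB : B.IsHermitian) (hL : IsUnit L) (hABL : A = Lᴴ * B * L)
    (hLc : (1 - Lᴴ * L).PosSemidef) {b : Fin n → ℝ} (ha : Antitone a) (hb : Antitone b)
    (hae : ∃ e : Equiv.Perm (Fin n), a = hA.eigenvalues ∘ e)
    (hbe : ∃ e : Equiv.Perm (Fin n), b = hB.eigenvalues ∘ e) {j : Fin n} (hbj : 0 ≤ b j) :
    a j ≤ b j := by
  obtain ⟨e, hae⟩ := hae
  obtain ⟨f, hbf⟩ := hbe
  obtain ⟨V, hV, hVa⟩ := hA.exists_finrank_eq_forall_mul_dotProduct_le ha hae j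
  obtain ⟨U, hU, hUb⟩ := hB.exists_finrank_eq_forall_dotProduct_le_mul hb hbf j
  have hLinj : Function.Injective L.mulVecLin := mulVec_injective_iff_isUnit.2 hL
  obtain ⟨y, hyVU, hy0⟩ := Submodule.ne_bot_iff _ |>.1 <|
    Submodule.inf_ne_bot_of_finrank_lt_add (p := V.map L.mulVecLin) (q := U) <| by
      rw [← LinearEquiv.finrank_eq (Submodule.equivMapOfInjective _ hLinj V), hV, hU,
        finrank_fin_fun]
      omega
  obtain ⟨⟨x, hxV, rfl⟩, hyU⟩ := hyVU
  have hx0 : 0 < x ⬝ᵥ x := by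
    have := dotProduct_self_star_pos_iff.2 fun (hx : x = 0) ↦ hy0 (by simp [hx])
    rwa [star_trivial] at this
  have hcontr : L *ᵥ x ⬝ᵥ L *ᵥ x ≤ x ⬝ᵥ x := by
    have := hLc.dotProduct_mulVec_nonneg x
    rw [star_trivial, sub_mulVec, one_mulVec, dotProduct_sub, ← Matrix.mul_one (Lᴴ * L),
      Matrix.mul_assoc, dotProduct_conjTranspose_mul_mulVec, Matrix.mul_one] at this
    linarith
  refine le_of_mul_le_mul_right ?_ hx0
  calc a j * (x ⬝ᵥ x) ≤ x ⬝ᵥ A *ᵥ x := hVa x hxV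
    _ = L *ᵥ x ⬝ᵥ B *ᵥ (L *ᵥ x) := by
      rw [hABL, Matrix.mul_assoc, dotProduct_conjTranspose_mul_mulVec, mulVec_mulVec]
    _ ≤ b j * (L *ᵥ x ⬝ᵥ L *ᵥ x) := hUb _ hyU
    _ ≤ b j * (x ⬝ᵥ x) := mul_le_mul_of_nonneg_left hcontr hbj

end Matrix.IsHermitian

namespace Matrix

variable {ι α : Type*} [Fintype ι] [DecidableEq ι] [CommRing α] [StarRing α]
  {R S : Matrix ι ι α}

theorem inv_mul_mul_inv_eq_conjTranspose_mul_mul (hR : R.IsHermitian) (hS : S.IsHermitian)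
    (hSu : IsUnit S) (C : Matrix ι ι α) :
    R⁻¹ * C * R⁻¹ = (S * R⁻¹)ᴴ * (S⁻¹ * C * S⁻¹) * (S * R⁻¹) := by
  have hSd := (isUnit_iff_isUnit_det S).1 hSu
  rw [conjTranspose_mul, hR.inv.eq, hS.eq]
  simp only [Matrix.mul_assoc, mul_nonsing_inv_cancel_left _ _ hSd,
    nonsing_inv_mul_cancel_left _ _ hSd]

theorem one_sub_conjTranspose_mul_self_eq (hR : R.IsHermitian) (hRu : IsUnit R)
    (hS : S.IsHermitian) :
    1 - (S * R⁻¹)ᴴ * (S * R⁻¹) = (R⁻¹)ᴴ * (R * R - S * S) * R⁻¹ := by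
  have hRd := (isUnit_iff_isUnit_det R).1 hRu
  rw [conjTranspose_mul, hR.inv.eq, hS.eq, Matrix.mul_sub, Matrix.sub_mul]
  simp only [Matrix.mul_assoc, nonsing_inv_mul_cancel_left _ _ hRd, mul_nonsing_inv _ hRd]

theorem PosSemidef.inv_mul_mul_inv [PartialOrder α] {C : Matrix ι ι α} (hC : C.PosSemidef)
    (hR : R.IsHermitian) : (R⁻¹ * C * R⁻¹).PosSemidef := by
  simpa only [hR.inv.eq] using hC.conjTranspose_mul_mul_same R⁻¹

end Matrix

section Sqrt

open scoped MatrixOrder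

variable {ι : Type*} [Fintype ι] [DecidableEq ι] {A : Matrix ι ι ℝ}

theorem Matrix.PosSemidef.sqrt_eq_cfcSqrt (hA : A.PosSemidef) : hA.sqrt = CFC.sqrt A := by
  rw [CFC.sqrt_eq_cfc, cfc_nnreal_eq_real _ A, hA.1.cfc_eq, IsHermitian.cfc,
    Unitary.conjStarAlgAut_apply]
  unfold PosSemidef.sqrt
  congr 3
  funext i
  simp only [Function.comp_apply, Real.sqrt.eq_1]

theorem Matrix.PosSemidef.posSemidef_sqrt (hA : A.PosSemidef) : hA.sqrt.PosSemidef :=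
  hA.sqrt_eq_cfcSqrt ▸ (CFC.sqrt_nonneg A).posSemidef

theorem Matrix.PosSemidef.sqrt_mul_sqrt (hA : A.PosSemidef) : hA.sqrt * hA.sqrt = A :=
  hA.sqrt_eq_cfcSqrt ▸ CFC.sqrt_mul_sqrt_self A hA.nonneg

theorem Matrix.PosDef.isUnit_sqrt (hA : A.PosDef) : IsUnit hA.posSemidef.sqrt := by
  rw [hA.posSemidef.sqrt_eq_cfcSqrt, CFC.isUnit_sqrt_iff _ hA.posSemidef.nonneg]
  exact hA.isUnit

end Sqrt

/-- If `H_ρρ` and `W` are symmetric positive definite with `W - H_ρρ` positive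
semidefinite and `Ĥ_d` is symmetric positive semidefinite, then the decreasingly
sorted eigenvalues of `W⁻¹ Ĥ_d` (i.e. of `W^{-1/2} Ĥ_d W^{-1/2}`) are nonnegative and
bounded above, index by index, by those of `H_ρρ⁻¹ Ĥ_d`. -/
theorem stmt6 {n : ℕ} (Hρρ W Hd : Matrix (Fin n) (Fin n) ℝ)
    (hHρρ : Hρρ.PosDef) (hW : W.PosDef) (hWH : (W - Hρρ).PosSemidef)
    (hHd : Hd.PosSemidef)
    (hMW : (hW.posSemidef.sqrt⁻¹ * Hd * hW.posSemidef.sqrt⁻¹).IsHermitian)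
    (hMH : (hHρρ.posSemidef.sqrt⁻¹ * Hd * hHρρ.posSemidef.sqrt⁻¹).IsHermitian)
    (a b : Fin n → ℝ) (haanti : Antitone a) (hbanti : Antitone b)
    (ha : ∃ e : Equiv.Perm (Fin n), a = hMW.eigenvalues ∘ e)
    (hb : ∃ e : Equiv.Perm (Fin n), b = hMH.eigenvalues ∘ e) :
    ∀ j : Fin n, 0 ≤ a j ∧ a j ≤ b j := by
  set R := hW.posSemidef.sqrt
  set S := hHρρ.posSemidef.sqrt
  have hR : R.IsHermitian := hW.posSemidef.posSemidef_sqrt.isHermitian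
  have hS : S.IsHermitian := hHρρ.posSemidef.posSemidef_sqrt.isHermitian
  have hRu : IsUnit R := hW.isUnit_sqrt
  have hSu : IsUnit S := hHρρ.isUnit_sqrt
  intro j
  refine ⟨(hHd.inv_mul_mul_inv hR).nonneg_of_eq_eigenvalues_comp ha j, ?_⟩
  refine hMW.eigenvalue_le_of_eq_conjTranspose_mul_mul hMH (hSu.mul (isUnit_nonsing_inv_iff.2 hRu))
    (inv_mul_mul_inv_eq_conjTranspose_mul_mul hR hS hSu Hd) ?_ haanti hbanti ha hb
    ((hHd.inv_mul_mul_inv hS).nonneg_of_eq_eigenvalues_comp hb j)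
  rw [one_sub_conjTranspose_mul_self_eq hR hRu hS, hW.posSemidef.sqrt_mul_sqrt,
    hHρρ.posSemidef.sqrt_mul_sqrt]
  exact hWH.conjTranspose_mul_mul_same R⁻¹
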